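/- Let n, m ≥ 1, let W ∈ ℝ^{n×m} be an assignment matrix, let K_uu be an invertible symmetric m×m real matrix, let K_fu be an n×m real matrix, let K_ff be an n×n real matrix, and let β, γ ≥ 0. Suppose that every entry of K_ff − W K_uu Wᵀ has absolute value at most β, every entry of K_fu − W K_uu has absolute value at most β, and every entry of W − K_fu K_uu^{−1} has absolute value at most γ. Then every entry of K_ff − K_fu K_uu^{−1} K_fuᵀ has absolute value at most 3β + mβγ. -/

import Mathlib

open Matrix

/-- An assignment matrix: each row has exactly one entry equal to `1`
and all other entries equal to `0`. -/
def IsAssignmentMatrix {n m : ℕ} (W : Matrix (Fin n) (Fin m) ℝ) : Prop :=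
  ∀ i, ∃ j, W i j = 1 ∧ ∀ j', j' ≠ j → W i j' = 0

/-- entrywise bound on `K_ff − K_fu K_uu⁻¹ K_fuᵀ`. -/
theorem stmt_5 (n m : ℕ) (hn : 1 ≤ n) (hm : 1 ≤ m)
    (W : Matrix (Fin n) (Fin m) ℝ) (hW : IsAssignmentMatrix W)
    (K_uu : Matrix (Fin m) (Fin m) ℝ) (hKuu : IsUnit K_uu.det) (hKuuSymm : K_uu.IsSymm)
    (K_fu : Matrix (Fin n) (Fin m) ℝ)
    (K_ff : Matrix (Fin n) (Fin n) ℝ)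
    (β γ : ℝ) (hβ : 0 ≤ β) (hγ : 0 ≤ γ)
    (h1 : ∀ i i', |(K_ff - W * K_uu * Wᵀ) i i'| ≤ β)
    (h2 : ∀ i j, |(K_fu - W * K_uu) i j| ≤ β)
    (h3 : ∀ i j, |(W - K_fu * K_uu⁻¹) i j| ≤ γ) :
    ∀ i i', |(K_ff - K_fu * K_uu⁻¹ * K_fuᵀ) i i'| ≤ 3 * β + m * β * γ := by
  set E := K_fu - W * K_uu with hEdef
  set D := W - K_fu * K_uu⁻¹ with hDdef
  have h0 : K_uu⁻¹ * (K_uu * Wᵀ) = Wᵀ := by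
    rw [← Matrix.mul_assoc, Matrix.nonsing_inv_mul K_uu hKuu, Matrix.one_mul]
  have ht : Eᵀ = K_fuᵀ - K_uu * Wᵀ := by
    rw [hEdef, Matrix.transpose_sub, Matrix.transpose_mul,
      hKuuSymm.eq]
  have key : K_ff - K_fu * K_uu⁻¹ * K_fuᵀ =
      (K_ff - W * K_uu * Wᵀ) - E * Wᵀ - W * Eᵀ + D * Eᵀ := by
    simp only [hEdef, hDdef, ht, Matrix.transpose_sub, Matrix.transpose_mul, hKuuSymm.eq, Matrix.mul_sub, Matrix.sub_mul, Matrix.mul_assoc, h0]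
    abel
  -- row sums against an assignment row pick out a single entry
  have hsum : ∀ (i : Fin n) (f : Fin m → ℝ), (∃ j, (∀ j', j' ≠ j → W i j' = 0) ∧
      ∑ j', f j' * W i j' = f j) := by
    intro i f
    obtain ⟨j, hj1, hj0⟩ := hW i
    refine ⟨j, hj0, ?_⟩
    rw [Finset.sum_eq_single j]
    · rw [hj1, mul_one]
    · intro b _ hb; rw [hj0 b hb, mul_zero]
    · intro h; exact absurd (Finset.mem_univ j) h
  intro i i'
  rw [key]
  have hEW : |(E * Wᵀ) i i'| ≤ β := by
    obtain ⟨j, _, hs⟩ := hsum i' (fun j => E i j)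
    have : (E * Wᵀ) i i' = E i j := by
      rw [Matrix.mul_apply]; simpa [Matrix.transpose_apply] using hs
    rw [this]; exact h2 i j
  have hWE : |(W * Eᵀ) i i'| ≤ β := by
    obtain ⟨j, _, hs⟩ := hsum i (fun j => E i' j)
    have : (W * Eᵀ) i i' = E i' j := by
      rw [Matrix.mul_apply]
      simpa [Matrix.transpose_apply, mul_comm] using hs
    rw [this]; exact h2 i' j
  have hDE : |(D * Eᵀ) i i'| ≤ m * β * γ := by
    rw [Matrix.mul_apply]
    calc |∑ j, D i j * Eᵀ j i'| ≤ ∑ j, |D i j * Eᵀ j i'| := Finset.abs_sum_le_sum_abs _ _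
      _ ≤ ∑ _j : Fin m, γ * β := by
          refine Finset.sum_le_sum fun j _ => ?_
          rw [abs_mul]
          exact mul_le_mul (h3 i j) (h2 i' j) (abs_nonneg _) hγ
      _ = m * β * γ := by
          rw [Finset.sum_const, Finset.card_univ, Fintype.card_fin, nsmul_eq_mul]; ring
  have hA := h1 i i'
  have expand : ((K_ff - W * K_uu * Wᵀ) - E * Wᵀ - W * Eᵀ + D * Eᵀ) i i' =
      (K_ff - W * K_uu * Wᵀ) i i' - (E * Wᵀ) i i' - (W * Eᵀ) i i' + (D * Eᵀ) i i' := by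
    simp [Matrix.sub_apply, Matrix.add_apply]
  rw [expand]
  calc |(K_ff - W * K_uu * Wᵀ) i i' - (E * Wᵀ) i i' - (W * Eᵀ) i i' + (D * Eᵀ) i i'|
      ≤ |(K_ff - W * K_uu * Wᵀ) i i' - (E * Wᵀ) i i' - (W * Eᵀ) i i'| + |(D * Eᵀ) i i'| :=
        abs_add_le _ _
    _ ≤ |(K_ff - W * K_uu * Wᵀ) i i' - (E * Wᵀ) i i'| + |(W * Eᵀ) i i'| + |(D * Eᵀ) i i'| := by
        gcongr; exact abs_sub _ _
    _ ≤ |(K_ff - W * K_uu * Wᵀ) i i'| + |(E * Wᵀ) i i'| + |(W * Eᵀ) i i'| + |(D * Eᵀ) i i'| := by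
        gcongr; exact abs_sub _ _
    _ ≤ β + β + β + m * β * γ := by gcongr
    _ = 3 * β + m * β * γ := by ring
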